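/- Let W ⊆ {x₁,...,x_n} be an admissible set of ⊟-points for a system of equations with dependency graph G, meaning: for every cycle in G, the unknown with the highest index on that cycle belongs to W. If all right-hand sides are monotone over a directed set D with widening/narrowing satisfying the standard chain conditions, then structured worklist iteration applying the combined operator ⊟ only at unknowns in W (and plain replacement ρ x := f_x ρ elsewhere) terminates. -/

import Mathlib

/-!
Induction on the number of unknowns, for arbitrary initial worklists outside of which every
unknown is stable. Suppose the iteration on `x_0, …, x_N` diverges. Since the worklist is
processed in increasing order, `x_N` is processed only when it is alone in the worklist, and
then its value must change (otherwise the worklist empties). If `x_N` were eventually never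
processed, its value would be frozen and the run would be a run of a system with `N` unknowns,
which terminates by induction; so `x_N` changes infinitely often.

If `x_N ∈ W`, its successive values `d_k` satisfy `d_{k+1} = d_k ⊟ b_k` with `b_k = f_N ρ`.
Either `b_k ⋢ d_k` always, and this is a widening sequence, or at some point `b_k ⊑ d_k`; then,
all other unknowns being stable, the whole state is a post-solution, which every step preserves
by monotonicity, so from then on the sequence is a narrowing sequence. Both stabilise.

If `x_N ∉ W`, admissibility rules out cycles through `x_N`, so the steps of the run on the
ancestors of `x_N` form a run of a system on fewer unknowns. By induction it terminates, after
which `f_N ρ` is constant, and so is the value `x_N` receives.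
-/

open Classical in
noncomputable def combine {D : Type*} [Preorder D] (w nar : D → D → D) (a b : D) : D :=
  if b ≤ a then nar a b else w a b

/- One step of structured worklist iteration applying `box` only at
unknowns in `W` (plain replacement elsewhere); on change, the influenced
unknowns are scheduled, together with the unknown itself if it lies in `W`. -/
open Classical in
noncomputable def swStepW {D : Type*} (box : D → D → D) (f : ℕ → (ℕ → D) → D)
    (infl : ℕ → Finset ℕ) (W : Set ℕ) :
    (ℕ → D) × Finset ℕ → (ℕ → D) × Finset ℕ :=
  fun s =>
    if h : s.2.Nonempty then
      let i := s.2.min' h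
      let newv := if i ∈ W then box (s.1 i) (f i s.1) else f i s.1
      if newv = s.1 i then (s.1, s.2.erase i)
      else (Function.update s.1 i newv,
        s.2.erase i ∪ infl i ∪ (if i ∈ W then {i} else ∅))
    else s

open Finset Function Filter

open Classical in
noncomputable def newValue {D : Type*} (box : D → D → D) (f : ℕ → (ℕ → D) → D) (W : Set ℕ)
    (ρ : ℕ → D) (i : ℕ) : D :=
  if i ∈ W then box (ρ i) (f i ρ) else f i ρ

def infl (dep : ℕ → Finset ℕ) (n i : ℕ) : Finset ℕ :=
  (range n).filter (fun j => i ∈ dep j)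

def Stable {D : Type*} (box : D → D → D) (f : ℕ → (ℕ → D) → D) (W : Set ℕ) (n : ℕ)
    (s : (ℕ → D) × Finset ℕ) : Prop :=
  ∀ j < n, j ∉ s.2 → newValue box f W s.1 j = s.1 j

def IsPostSolution {D : Type*} [Preorder D] (f : ℕ → (ℕ → D) → D) (n : ℕ) (ρ : ℕ → D) : Prop :=
  ∀ j < n, f j ρ ≤ ρ j

def Admissible (dep : ℕ → Finset ℕ) (W : Set ℕ) (n : ℕ) : Prop :=
  ∀ (c : ℕ → ℕ) (p : ℕ), 0 < p → (∀ k, c (k + p) = c k) →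
    (∀ k, c k ∈ dep (c (k + 1))) → (∀ k, c k < n) → ∃ k, c k ∈ W ∧ ∀ j, c j ≤ c k

def Terminates {D : Type*} [Preorder D] (box : D → D → D) (n : ℕ) : Prop :=
  ∀ (f : ℕ → (ℕ → D) → D) (dep : ℕ → Finset ℕ) (W : Set ℕ), (∀ i, Monotone (f i)) →
    (∀ i, DependsOn (f i) (dep i)) → Admissible dep W n →
    ∀ s : (ℕ → D) × Finset ℕ, s.2 ⊆ range n → Stable box f W n s →
      ∃ k, ((swStepW box f (infl dep n) W)^[k] s).2 = ∅

section Step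

variable {D : Type*} (box : D → D → D) (f : ℕ → (ℕ → D) → D) (infl : ℕ → Finset ℕ) (W : Set ℕ)

open Classical in
theorem swStepW_of_isLeast {s : (ℕ → D) × Finset ℕ} {i : ℕ} (hi : IsLeast (↑s.2 : Set ℕ) i) :
    swStepW box f infl W s =
      if newValue box f W s.1 i = s.1 i then (s.1, s.2.erase i)
      else (update s.1 i (newValue box f W s.1 i),
        s.2.erase i ∪ infl i ∪ (if i ∈ W then {i} else ∅)) := by
  have hne : s.2.Nonempty := ⟨i, hi.1⟩
  have hmin : s.2.min' hne = i := (s.2.isLeast_min' hne).unique hi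
  simp only [swStepW, dif_pos hne, hmin, newValue]
  rfl

theorem swStepW_of_eq_empty {s : (ℕ → D) × Finset ℕ} (h : s.2 = ∅) :
    swStepW box f infl W s = s := by
  simp [swStepW, h]

theorem swStepW_fst_of_isLeast {s : (ℕ → D) × Finset ℕ} {i : ℕ} (hi : IsLeast (↑s.2 : Set ℕ) i) :
    (swStepW box f infl W s).1 i = newValue box f W s.1 i := by
  rw [swStepW_of_isLeast box f infl W hi]
  by_cases h : newValue box f W s.1 i = s.1 i
  · rw [if_pos h, h]
  · rw [if_neg h]
    exact update_self _ _ _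

theorem swStepW_fst_of_not_isLeast {s : (ℕ → D) × Finset ℕ} {j : ℕ}
    (hj : ¬ IsLeast (↑s.2 : Set ℕ) j) : (swStepW box f infl W s).1 j = s.1 j := by
  obtain hempty | hne := s.2.eq_empty_or_nonempty
  · rw [swStepW_of_eq_empty box f infl W hempty]
  obtain ⟨i, hi⟩ : ∃ i, IsLeast (↑s.2 : Set ℕ) i := ⟨_, s.2.isLeast_min' hne⟩
  rw [swStepW_of_isLeast box f infl W hi]
  by_cases h : newValue box f W s.1 i = s.1 i
  · rw [if_pos h]
  · rw [if_neg h]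
    exact update_of_ne (by rintro rfl; exact hj hi) _ _

theorem swStepW_snd_subset {s : (ℕ → D) × Finset ℕ} {n : ℕ} (hs : s.2 ⊆ range n)
    (hinfl : ∀ i, infl i ⊆ range n) : (swStepW box f infl W s).2 ⊆ range n := by
  obtain hempty | hne := s.2.eq_empty_or_nonempty
  · rwa [swStepW_of_eq_empty box f infl W hempty]
  obtain ⟨i, hi⟩ : ∃ i, IsLeast (↑s.2 : Set ℕ) i := ⟨_, s.2.isLeast_min' hne⟩
  rw [swStepW_of_isLeast box f infl W hi]
  split_ifs
  · exact (erase_subset _ _).trans hs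
  · exact union_subset (union_subset ((erase_subset _ _).trans hs) (hinfl _))
      (singleton_subset_iff.2 (hs hi.1))
  · simpa using union_subset ((erase_subset _ _).trans hs) (hinfl _)

end Step

section Invariants

variable {D : Type*} {box : D → D → D} {f : ℕ → (ℕ → D) → D} {W : Set ℕ} {n : ℕ}

theorem newValue_congr {f' : ℕ → (ℕ → D) → D} {ρ ρ' : ℕ → D} {j : ℕ} (hval : ρ' j = ρ j)
    (hf : f' j ρ' = f j ρ) : newValue box f' W ρ' j = newValue box f W ρ j := by
  simp only [newValue, hval, hf]

theorem Stable.swStepW {dep : ℕ → Finset ℕ} (hdep : ∀ i, DependsOn (f i) (dep i))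
    {s : (ℕ → D) × Finset ℕ} (hs : Stable box f W n s) :
    Stable box f W n (swStepW box f (infl dep n) W s) := by
  obtain hempty | hne := s.2.eq_empty_or_nonempty
  · rwa [swStepW_of_eq_empty box f _ W hempty]
  obtain ⟨i, hi⟩ : ∃ i, IsLeast (↑s.2 : Set ℕ) i := ⟨_, s.2.isLeast_min' hne⟩
  intro j hj hjQ
  rw [swStepW_of_isLeast box f _ W hi] at hjQ ⊢
  by_cases hchg : newValue box f W s.1 i = s.1 i
  · rw [if_pos hchg] at hjQ ⊢
    dsimp only
    obtain rfl | hji := eq_or_ne j i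
    · exact hchg
    · exact hs j hj (fun h => hjQ (mem_erase.2 ⟨hji, h⟩))
  rw [if_neg hchg] at hjQ ⊢
  dsimp only
  simp only [mem_union, not_or, infl, mem_filter, mem_range, not_and] at hjQ
  obtain ⟨⟨hjQ, hij⟩, hjW⟩ := hjQ
  have hfj : f j (update s.1 i (newValue box f W s.1 i)) = f j s.1 :=
    hdep j fun k hk => update_of_ne (by rintro rfl; exact hij hj hk) _ _
  obtain rfl | hji := eq_or_ne j i
  · have hjW : j ∉ W := fun h => by simp [h] at hjW
    simp only [newValue, if_neg hjW, update_self] at hfj ⊢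
    exact hfj
  · rw [newValue_congr (update_of_ne hji _ _) hfj, update_of_ne hji]
    exact hs j hj (fun h => hjQ (mem_erase.2 ⟨hji, h⟩))

variable [Preorder D]

theorem Stable.le_of_notMem (hbox : ∀ a b : D, box a b = a → b ≤ a)
    {s : (ℕ → D) × Finset ℕ} (hs : Stable box f W n s) {j : ℕ} (hj : j < n) (hjQ : j ∉ s.2) :
    f j s.1 ≤ s.1 j := by
  have h := hs j hj hjQ
  unfold newValue at h
  split_ifs at h
  · exact hbox _ _ h
  · exact h.le

theorem IsPostSolution.swStepW (hmono : ∀ i, Monotone (f i))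
    (hbox : ∀ a b : D, b ≤ a → box a b ∈ Set.Icc b a) {infl : ℕ → Finset ℕ}
    {s : (ℕ → D) × Finset ℕ} (hQ : s.2 ⊆ range n) (hpost : IsPostSolution f n s.1) :
    IsPostSolution f n (swStepW box f infl W s).1 := by
  obtain hempty | hne := s.2.eq_empty_or_nonempty
  · rwa [swStepW_of_eq_empty box f infl W hempty]
  obtain ⟨i, hi⟩ : ∃ i, IsLeast (↑s.2 : Set ℕ) i := ⟨_, s.2.isLeast_min' hne⟩
  have hfi : f i s.1 ≤ s.1 i := hpost i (mem_range.1 (hQ hi.1))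
  have hnew : newValue box f W s.1 i ∈ Set.Icc (f i s.1) (s.1 i) := by
    unfold newValue
    split_ifs
    · exact hbox _ _ hfi
    · exact ⟨le_rfl, hfi⟩
  have hother : ∀ j ≠ i, (_root_.swStepW box f infl W s).1 j = s.1 j := fun j hj =>
    swStepW_fst_of_not_isLeast box f infl W fun hj' => hj (hj'.unique hi)
  have hle : (_root_.swStepW box f infl W s).1 ≤ s.1 := fun j => by
    obtain rfl | hj := eq_or_ne j i
    · rw [swStepW_fst_of_isLeast box f infl W hi]
      exact hnew.2
    · exact (hother j hj).le
  intro j hj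
  refine (hmono j hle).trans ?_
  obtain rfl | hji := eq_or_ne j i
  · rw [swStepW_fst_of_isLeast box f infl W hi]
    exact hnew.1
  · rw [hother j hji]
    exact hpost j hj


end Invariants

section Combine

variable {D : Type*} [PartialOrder D] (w nar : D → D → D)

theorem combine_of_le {a b : D} (h : b ≤ a) : combine w nar a b = nar a b := if_pos h

theorem combine_of_not_le {a b : D} (h : ¬ b ≤ a) : combine w nar a b = w a b := if_neg h

variable {w nar}

theorem combine_self (hn : ∀ a b : D, b ≤ a → b ≤ nar a b ∧ nar a b ≤ a) (a : D) :
    combine w nar a a = a := by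
  rw [combine_of_le w nar le_rfl]
  exact le_antisymm (hn a a le_rfl).2 (hn a a le_rfl).1

theorem combine_mem_Icc (hn : ∀ a b : D, b ≤ a → b ≤ nar a b ∧ nar a b ≤ a) {a b : D}
    (h : b ≤ a) : combine w nar a b ∈ Set.Icc b a := by
  rw [combine_of_le w nar h]
  exact hn a b h

theorem le_of_combine_eq (hw2 : ∀ a b : D, b ≤ w a b) {a b : D} (h : combine w nar a b = a) :
    b ≤ a := by
  by_contra hba
  rw [combine_of_not_le w nar hba] at h
  exact hba (h ▸ hw2 a b)

theorem exists_succ_eq_of_eq_combine (hwterm : ∀ d b : ℕ → D, (∀ i, d (i+1) = w (d i) (b i)) →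
      ∃ N, ∀ m, N ≤ m → d m = d N)
    (hnterm : ∀ d b : ℕ → D, (∀ i, b i ≤ d i ∧ d (i+1) = nar (d i) (b i)) →
      ∃ N, ∀ m, N ≤ m → d m = d N)
    {d b : ℕ → D} (hd : ∀ k, d (k + 1) = combine w nar (d k) (b k))
    (hpersist : ∀ k₀, b k₀ ≤ d k₀ → ∀ k ≥ k₀, b k ≤ d k) :
    ∃ k, d (k + 1) = d k := by
  by_cases hle : ∃ k₀, b k₀ ≤ d k₀
  · obtain ⟨k₀, hk₀⟩ := hle
    have hnar : ∀ i, b (k₀ + i) ≤ d (k₀ + i) ∧ d (k₀ + i + 1) = nar (d (k₀ + i)) (b (k₀ + i)) :=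
      fun i => have h := hpersist k₀ hk₀ (k₀ + i) (by omega)
        ⟨h, (hd _).trans (combine_of_le w nar h)⟩
    obtain ⟨M, hM⟩ := hnterm _ _ hnar
    exact ⟨k₀ + M, hM (M + 1) (by omega)⟩
  · push Not at hle
    obtain ⟨M, hM⟩ := hwterm d b fun k => (hd k).trans (combine_of_not_le w nar (hle k))
    exact ⟨M, hM (M + 1) (by omega)⟩

end Combine

section Cycles

theorem Relation.TransGen.exists_path {α : Type*} {r : α → α → Prop} {a b : α}
    (h : Relation.TransGen r a b) :
    ∃ p > 0, ∃ c : ℕ → α, c 0 = a ∧ c p = b ∧ ∀ k < p, r (c k) (c (k + 1)) := by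
  induction h with
  | single hab =>
    refine ⟨1, one_pos, fun k => if k = 0 then a else _, rfl, rfl, fun k hk => ?_⟩
    obtain rfl : k = 0 := by omega
    exact hab
  | @tail b' b _ hb ih =>
    obtain ⟨p, hp, c, hc0, hcp, hc⟩ := ih
    refine ⟨p + 1, by omega, fun k => if k ≤ p then c k else b, by simpa using hc0,
      by simp, fun k hk => ?_⟩
    obtain hkp | rfl := Nat.lt_or_eq_of_le (Nat.lt_succ_iff.1 hk)
    · simpa [hkp.le, Nat.succ_le_of_lt hkp] using hc k hkp
    · simpa [hcp] using hb

theorem Nat.add_one_mod_eq_or {k p : ℕ} (hp : 0 < p) :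
    (k + 1) % p = k % p + 1 ∨ (k % p + 1 = p ∧ (k + 1) % p = 0) := by
  have hdiv := Nat.mod_add_div k p
  have hlt := Nat.mod_lt k hp
  generalize k % p = m, k / p = q at *
  by_cases h : m + 1 < p
  · left
    rw [show k + 1 = (m + 1) + p * q by omega, Nat.add_mul_mod_self_left, Nat.mod_eq_of_lt h]
  · right
    refine ⟨by omega, ?_⟩
    rw [show k + 1 = p * (q + 1) by rw [mul_add]; omega, Nat.mul_mod_right]

theorem Relation.TransGen.exists_periodic {α : Type*} {r : α → α → Prop} {a : α}
    (h : Relation.TransGen r a a) :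
    ∃ p > 0, ∃ c : ℕ → α, Periodic c p ∧ (∀ k, r (c k) (c (k + 1))) ∧ c 0 = a := by
  obtain ⟨p, hp, c, hc0, hcp, hc⟩ := h.exists_path
  refine ⟨p, hp, fun k => c (k % p), fun k => by simp, fun k => ?_, by simpa using hc0⟩
  have hstep := hc (k % p) (Nat.mod_lt k hp)
  obtain hmod | ⟨hwrap, hmod⟩ := Nat.add_one_mod_eq_or (k := k) hp
  · simpa [hmod] using hstep
  · simpa [hmod, hc0, ← hcp, hwrap] using hstep

def DepEdge (dep : ℕ → Finset ℕ) (n a b : ℕ) : Prop := a < n ∧ a ∈ dep b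

theorem Admissible.mono {dep dep' : ℕ → Finset ℕ} {W : Set ℕ} {n n' : ℕ}
    (h : Admissible dep W n) (hdep : ∀ i, dep' i ⊆ dep i) (hn : n' ≤ n) :
    Admissible dep' W n' := fun c p hp hper hedge hlt =>
  h c p hp hper (fun k => hdep _ (hedge k)) (fun k => (hlt k).trans_le hn)

theorem Admissible.exists_mem_ge_of_transGen {dep : ℕ → Finset ℕ} {W : Set ℕ} {n x : ℕ}
    (h : Admissible dep W n) (hx : Relation.TransGen (DepEdge dep n) x x) :
    ∃ v ∈ W, x ≤ v ∧ v < n := by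
  obtain ⟨p, hp, c, hper, hedge, hc0⟩ := hx.exists_periodic
  obtain ⟨k, hkW, hkmax⟩ := h c p hp hper (fun k => (hedge k).2) (fun k => (hedge k).1)
  exact ⟨c k, hkW, hc0 ▸ hkmax 0, (hedge k).1⟩

open Classical in
noncomputable def ancestors (dep : ℕ → Finset ℕ) (N : ℕ) : Finset ℕ :=
  (range N).filter (fun j => Relation.ReflTransGen (DepEdge dep (N + 1)) j N)

theorem mem_ancestors {dep : ℕ → Finset ℕ} {N j : ℕ} :
    j ∈ ancestors dep N ↔ j < N ∧ Relation.ReflTransGen (DepEdge dep (N + 1)) j N := by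
  simp [ancestors]

/-- A cycle through `N` would have `N` as its highest unknown. -/
theorem Admissible.mem_ancestors_of_mem_dep {dep : ℕ → Finset ℕ} {W : Set ℕ} {N i j : ℕ}
    (hadm : Admissible dep W (N + 1)) (hNW : N ∉ W) (hj : j ∈ ancestors dep N ∨ j = N)
    (hi : i < N + 1) (hij : i ∈ dep j) : i ∈ ancestors dep N := by
  have hjN : Relation.ReflTransGen (DepEdge dep (N + 1)) j N := by
    obtain hj | rfl := hj
    · exact (mem_ancestors.1 hj).2
    · exact .refl
  refine mem_ancestors.2 ⟨lt_of_le_of_ne (Nat.lt_succ_iff.1 hi) ?_, hjN.head ⟨hi, hij⟩⟩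
  rintro rfl
  obtain ⟨v, hvW, hiv, hv⟩ := hadm.exists_mem_ge_of_transGen (.head' ⟨hi, hij⟩ hjN)
  obtain rfl : v = i := by omega
  exact hNW hvW

end Cycles

section Simulation

variable {β : Type*} {G : β → β} {R : β → ℕ → Prop} {p : ℕ → Prop}

theorem rel_add_of_forall_not (hnp : ∀ b t, R b t → ¬ p t → R b (t + 1)) {b : β} {t₀ : ℕ}
    (h₀ : R b t₀) : ∀ m, (∀ i < m, ¬ p (t₀ + i)) → R b (t₀ + m)
  | 0, _ => h₀
  | m + 1, hm => hnp b _ (rel_add_of_forall_not hnp h₀ m fun i hi => hm i (by omega))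
      (hm m (by omega))

theorem eventually_not_of_simulation {halted : β → Prop}
    (hp : ∀ b t, R b t → p t → R (G b) (t + 1))
    (hnp : ∀ b t, R b t → ¬ p t → R b (t + 1))
    (hhalted : ∀ b t, halted b → R b t → ¬ p t) {K : ℕ} {b₀ : β} {t₀ : ℕ} (h₀ : R b₀ t₀)
    (hK : halted (G^[K] b₀)) : ∀ᶠ t in atTop, ¬ p t := by
  classical
  by_cases hex : ∃ m, p (t₀ + m)
  · have hR := rel_add_of_forall_not hnp h₀ _ fun i hi => Nat.find_min hex hi
    cases K with
    | zero => exact absurd (Nat.find_spec hex) (hhalted _ _ hK hR)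
    | succ K =>
      rw [iterate_succ_apply] at hK
      exact eventually_not_of_simulation hp hnp hhalted (hp _ _ hR (Nat.find_spec hex)) hK
  · push Not at hex
    exact eventually_atTop.2 ⟨t₀, fun t ht => by simpa [Nat.add_sub_cancel' ht] using hex (t - t₀)⟩

end Simulation

section Projection

variable {D : Type*} (box : D → D → D) {f f' : ℕ → (ℕ → D) → D} {infl infl' : ℕ → Finset ℕ}
  (W : Set ℕ) {A : Finset ℕ} {s σ : (ℕ → D) × Finset ℕ} {i : ℕ}

theorem swStepW_project_of_mem (hi : IsLeast (↑s.2 : Set ℕ) i) (hiA : i ∈ A)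
    (hσ : σ.2 = s.2 ∩ A) (hval : σ.1 i = s.1 i) (hf : f' i σ.1 = f i s.1)
    (hinfl : infl' i = infl i ∩ A) :
    (swStepW box f' infl' W σ).2 = (swStepW box f infl W s).2 ∩ A ∧
      ∀ j, σ.1 j = s.1 j → (swStepW box f' infl' W σ).1 j = (swStepW box f infl W s).1 j := by
  have hiσ : IsLeast (↑σ.2 : Set ℕ) i := by
    refine ⟨?_, fun j hj => hi.2 ?_⟩
    · simpa [hσ] using And.intro hi.1 hiA
    · simp only [hσ, coe_inter, Set.mem_inter_iff] at hj
      exact hj.1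
  rw [swStepW_of_isLeast box f' infl' W hiσ, swStepW_of_isLeast box f infl W hi,
    newValue_congr hval hf, hval]
  by_cases hchg : newValue box f W s.1 i = s.1 i
  · rw [if_pos hchg, if_pos hchg, hσ]
    exact ⟨(erase_inter ..).symm, fun j hj => hj⟩
  rw [if_neg hchg, if_neg hchg]
  refine ⟨?_, fun j hj => ?_⟩
  · ext x
    simp only [hσ, hinfl, mem_union, mem_inter, mem_erase]
    split_ifs <;> simp only [mem_singleton, notMem_empty] <;> grind
  · obtain rfl | hji := eq_or_ne j i
    · simp
    · simpa [hji] using hj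

theorem swStepW_snd_inter_of_notMem (hi : IsLeast (↑s.2 : Set ℕ) i) (hiA : i ∉ A)
    (hinfl : Disjoint (infl i) A) :
    (swStepW box f infl W s).2 ∩ A = s.2 ∩ A := by
  rw [swStepW_of_isLeast box f infl W hi]
  have hx : ∀ x ∈ A, x ∉ infl i ∧ x ≠ i := fun x hx =>
    ⟨fun h => disjoint_left.1 hinfl h hx, by rintro rfl; exact hiA hx⟩
  ext x
  split_ifs <;> simp only [mem_inter, mem_union, mem_erase, mem_singleton, notMem_empty] <;>
    grind

end Projection

structure DivergentRun {D : Type*} (box : D → D → D) (f : ℕ → (ℕ → D) → D)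
    (dep : ℕ → Finset ℕ) (W : Set ℕ) (n : ℕ) where
  state : ℕ → (ℕ → D) × Finset ℕ
  head : ℕ → ℕ
  state_succ : ∀ t, state (t + 1) = swStepW box f (infl dep n) W (state t)
  isLeast_head : ∀ t, IsLeast (↑(state t).2 : Set ℕ) (head t)
  snd_subset : ∀ t, (state t).2 ⊆ range n
  stable : ∀ t, Stable box f W n (state t)

namespace DivergentRun

variable {D : Type*} {box : D → D → D} {f : ℕ → (ℕ → D) → D} {dep : ℕ → Finset ℕ} {W : Set ℕ}

section

variable {n : ℕ}

noncomputable def ofIterate (hdep : ∀ i, DependsOn (f i) (dep i)) {s : (ℕ → D) × Finset ℕ}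
    (hQ : s.2 ⊆ range n) (hs : Stable box f W n s)
    (hdiv : ∀ k, ((swStepW box f (infl dep n) W)^[k] s).2.Nonempty) :
    DivergentRun box f dep W n where
  state t := (swStepW box f (infl dep n) W)^[t] s
  head t := ((swStepW box f (infl dep n) W)^[t] s).2.min' (hdiv t)
  state_succ t := iterate_succ_apply' ..
  isLeast_head t := isLeast_min' _ _
  snd_subset t := by
    induction t with
    | zero => exact hQ
    | succ t ih =>
      rw [iterate_succ_apply']
      exact swStepW_snd_subset box f _ W ih fun i => filter_subset _ _
  stable t := by
    induction t with
    | zero => exact hs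
    | succ t ih =>
      rw [iterate_succ_apply']
      exact ih.swStepW hdep

variable (r : DivergentRun box f dep W n)

theorem head_mem_snd (t : ℕ) : r.head t ∈ (r.state t).2 := (r.isLeast_head t).1

theorem head_lt (t : ℕ) : r.head t < n := mem_range.1 (r.snd_subset t (r.head_mem_snd t))

theorem state_succ_fst_head (t : ℕ) :
    (r.state (t + 1)).1 (r.head t) = newValue box f W (r.state t).1 (r.head t) := by
  rw [r.state_succ]
  exact swStepW_fst_of_isLeast box f _ W (r.isLeast_head t)

theorem state_succ_fst_of_ne {t j : ℕ} (hj : r.head t ≠ j) :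
    (r.state (t + 1)).1 j = (r.state t).1 j := by
  rw [r.state_succ]
  exact swStepW_fst_of_not_isLeast box f _ W fun h => hj ((r.isLeast_head t).unique h)

theorem state_fst_eq_of_forall_head_ne {t t' j : ℕ} (htt' : t ≤ t')
    (hj : ∀ u, t ≤ u → u < t' → r.head u ≠ j) : (r.state t').1 j = (r.state t).1 j := by
  induction t', htt' using Nat.le_induction with
  | base => rfl
  | succ u htu ih =>
    rw [r.state_succ_fst_of_ne (hj u htu (by omega)), ih fun v hv hvu => hj v hv (by omega)]

theorem eventually_head_notMem {m : ℕ} {A : Finset ℕ} {V : Set ℕ} {T : ℕ}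
    {f' : ℕ → (ℕ → D) → D} {dep' : ℕ → Finset ℕ} (hAV : ↑A ⊆ V)
    (hterm : ∃ K, ((swStepW box f' (infl dep' m) W)^[K] ((r.state T).1, (r.state T).2 ∩ A)).2 = ∅)
    (hf' : ∀ t ≥ T, ∀ ρ, (∀ j ∈ V, ρ j = (r.state t).1 j) → ∀ i ∈ A, f' i ρ = f i (r.state t).1)
    (hinfl : ∀ i ∈ A, infl dep' m i = infl dep n i ∩ A)
    (hout : ∀ t ≥ T, r.head t ∉ A → Disjoint (infl dep n (r.head t)) A ∧ r.head t ∉ V) :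
    ∀ᶠ t in atTop, r.head t ∉ A := by
  obtain ⟨K, hK⟩ := hterm
  refine eventually_not_of_simulation (G := swStepW box f' (infl dep' m) W)
    (R := fun σ t => T ≤ t ∧ σ.2 = (r.state t).2 ∩ A ∧ ∀ j ∈ V, σ.1 j = (r.state t).1 j)
    (halted := fun σ => σ.2 = ∅) ?_ ?_ ?_ (b₀ := ((r.state T).1, (r.state T).2 ∩ A))
    ⟨le_rfl, rfl, fun _ _ => rfl⟩ hK
  · rintro σ t ⟨ht, hσ, hV⟩ hiA
    obtain ⟨hsnd, hfst⟩ := swStepW_project_of_mem box W (r.isLeast_head t) hiA hσ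
      (hV _ (hAV hiA)) (hf' t ht _ hV _ hiA) (hinfl _ hiA)
    rw [r.state_succ]
    exact ⟨by omega, hsnd, fun j hj => hfst j (hV j hj)⟩
  · rintro σ t ⟨ht, hσ, hV⟩ hiA
    obtain ⟨hdisj, hiV⟩ := hout t ht hiA
    refine ⟨by omega, ?_, fun j hj => ?_⟩
    · rw [r.state_succ, swStepW_snd_inter_of_notMem box W (r.isLeast_head t) hiA hdisj, hσ]
    · rw [r.state_succ_fst_of_ne (by rintro rfl; exact hiV hj)]
      exact hV j hj
  · rintro σ t hσ ⟨-, hσ', -⟩ hiA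
    have h := mem_inter.2 ⟨r.head_mem_snd t, hiA⟩
    rw [← hσ', hσ] at h
    exact notMem_empty _ h

theorem isPostSolution_of_le [PartialOrder D] (hmono : ∀ i, Monotone (f i))
    (hbox : ∀ a b : D, b ≤ a → box a b ∈ Set.Icc b a) {t₀ t : ℕ} (ht : t₀ ≤ t)
    (h₀ : IsPostSolution f n (r.state t₀).1) : IsPostSolution f n (r.state t).1 := by
  induction t, ht using Nat.le_induction with
  | base => exact h₀
  | succ t _ ih =>
    rw [r.state_succ]
    exact ih.swStepW hmono hbox (r.snd_subset t)

end

section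

variable {N : ℕ} (r : DivergentRun box f dep W (N + 1))

theorem snd_eq_singleton_of_head_eq {t : ℕ} (ht : r.head t = N) : (r.state t).2 = {N} := by
  have hN := r.head_mem_snd t
  rw [ht] at hN
  refine eq_singleton_iff_unique_mem.2 ⟨hN, fun x hx => ?_⟩
  have h1 := mem_range.1 (r.snd_subset t hx)
  have h2 := (r.isLeast_head t).2 hx
  omega

theorem newValue_ne_of_head_eq {t : ℕ} (ht : r.head t = N) :
    newValue box f W (r.state t).1 N ≠ (r.state t).1 N := by
  intro hstab
  have hi := r.isLeast_head t
  rw [ht] at hi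
  have hsucc := r.head_mem_snd (t + 1)
  rw [r.state_succ, swStepW_of_isLeast box f _ W hi, if_pos hstab,
    r.snd_eq_singleton_of_head_eq ht, erase_singleton] at hsucc
  exact notMem_empty _ hsucc

noncomputable def topTime (k : ℕ) : ℕ := Nat.nth (fun t => r.head t = N) k

variable {r}

theorem head_topTime (hfreq : ∃ᶠ t in atTop, r.head t = N) (k : ℕ) : r.head (r.topTime k) = N :=
  Nat.nth_mem_of_infinite (Nat.frequently_atTop_iff_infinite.1 hfreq) k

theorem topTime_strictMono (hfreq : ∃ᶠ t in atTop, r.head t = N) : StrictMono r.topTime :=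
  Nat.nth_strictMono (Nat.frequently_atTop_iff_infinite.1 hfreq)

theorem state_topTime_succ (hfreq : ∃ᶠ t in atTop, r.head t = N) (k : ℕ) :
    (r.state (r.topTime (k + 1))).1 N = newValue box f W (r.state (r.topTime k)).1 N := by
  have hlt := topTime_strictMono hfreq (Nat.lt_succ_self k)
  rw [r.state_fst_eq_of_forall_head_ne (Nat.succ_le_of_lt hlt) fun u hu hu' hN =>
      absurd (Nat.le_nth_of_lt_nth_succ hu' hN) (by unfold topTime at hu; omega)]
  have h := r.state_succ_fst_head (r.topTime k)
  rwa [head_topTime hfreq k] at h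

theorem rhs_top_le_of_le [PartialOrder D] (hmono : ∀ i, Monotone (f i))
    (hstab : ∀ a b : D, box a b = a → b ≤ a)
    (hnarrow : ∀ a b : D, b ≤ a → box a b ∈ Set.Icc b a)
    (hfreq : ∃ᶠ t in atTop, r.head t = N) {k₀ k : ℕ}
    (hk : k₀ ≤ k) (h₀ : f N (r.state (r.topTime k₀)).1 ≤ (r.state (r.topTime k₀)).1 N) :
    f N (r.state (r.topTime k)).1 ≤ (r.state (r.topTime k)).1 N := by
  have hpost : IsPostSolution f (N + 1) (r.state (r.topTime k₀)).1 := fun j hj => by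
    obtain rfl | hjN := eq_or_ne j N
    · exact h₀
    · refine (r.stable _).le_of_notMem hstab hj ?_
      rw [r.snd_eq_singleton_of_head_eq (head_topTime hfreq k₀)]
      simpa using hjN
  exact r.isPostSolution_of_le hmono hnarrow
    ((topTime_strictMono hfreq).monotone hk) hpost N (Nat.lt_succ_self N)

variable (r)

/-- Otherwise `x_N` is eventually frozen, and the run is simulated by the system on `range N`
with `x_N` fixed to its final value. -/
theorem frequently_head_eq [Preorder D] (ih : Terminates box N) (hmono : ∀ i, Monotone (f i))
    (hdep : ∀ i, DependsOn (f i) (dep i)) (hadm : Admissible dep W (N + 1)) :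
    ∃ᶠ t in atTop, r.head t = N := by
  by_contra hfin
  obtain ⟨T, hT⟩ := eventually_atTop.1 (not_frequently.1 hfin)
  have hlt : ∀ t ≥ T, r.head t < N := fun t ht =>
    lt_of_le_of_ne (Nat.lt_succ_iff.1 (r.head_lt t)) (hT t ht)
  set v := (r.state T).1 N
  set f' : ℕ → (ℕ → D) → D := fun j ρ => f j (update ρ N v)
  set dep' : ℕ → Finset ℕ := fun j => (dep j).erase N
  have hf' : ∀ t ≥ T, ∀ j, f' j (r.state t).1 = f j (r.state t).1 := fun t ht j => by
    have hv : (r.state t).1 N = v := r.state_fst_eq_of_forall_head_ne ht fun u hu _ => hT u hu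
    simp only [f', ← hv, update_eq_self]
  have hmono' : ∀ i, Monotone (f' i) := fun i ρ ρ' h =>
    hmono i (update_le_update_iff.2 ⟨le_rfl, fun j _ => h j⟩)
  have hdep' : ∀ i, DependsOn (f' i) (dep' i) := fun i ρ ρ' h => hdep i fun j hj => by
    obtain rfl | hjN := eq_or_ne j N
    · simp
    · simp [hjN, h j (mem_erase.2 ⟨hjN, hj⟩)]
  have hstable : Stable box f' W N ((r.state T).1, (r.state T).2 ∩ range N) := fun j hj hjQ => by
    rw [newValue_congr rfl (hf' T le_rfl j)]
    exact r.stable T j (by omega) fun h => hjQ (mem_inter.2 ⟨h, mem_range.2 hj⟩)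
  have hinfl : ∀ i ∈ range N, infl dep' N i = infl dep (N + 1) i ∩ range N := fun i hi => by
    ext x
    simp only [infl, dep', mem_filter, mem_range, mem_inter, mem_erase] at hi ⊢
    grind
  have hnever := r.eventually_head_notMem (V := Set.univ) (Set.subset_univ _)
    (ih f' dep' W hmono' hdep' (hadm.mono (fun i => erase_subset _ _) (by omega)) _
      inter_subset_right hstable)
    (fun t ht ρ hρ i _ => by rw [← hf' t ht, funext fun j => hρ j trivial]) hinfl
    (fun t ht hA => absurd (mem_range.2 (hlt t ht)) hA)
  obtain ⟨t, ht⟩ := (hnever.and (eventually_ge_atTop T)).exists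
  exact ht.1 (mem_range.2 (hlt t ht.2))

/-- The run restricted to the ancestors of `N` is a run of a system on `range N` in which all
other unknowns are constant. -/
theorem eventually_head_notMem_ancestors [Preorder D] (ih : Terminates box N)
    (hbox : ∀ a, box a a = a) (hmono : ∀ i, Monotone (f i)) (hdep : ∀ i, DependsOn (f i) (dep i))
    (hadm : Admissible dep W (N + 1)) (hNW : N ∉ W) :
    ∀ᶠ t in atTop, r.head t ∉ ancestors dep N := by
  classical
  set A := ancestors dep N
  have hAN : ∀ j ∈ A, j < N := fun j hj => (mem_ancestors.1 hj).1
  set ρ₀ := (r.state 0).1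
  set f' : ℕ → (ℕ → D) → D := fun j => if j ∈ A then f j else fun _ => ρ₀ j
  set dep' : ℕ → Finset ℕ := fun j => if j ∈ A then dep j else ∅
  have hmono' : ∀ i, Monotone (f' i) := fun i => by
    by_cases hi : i ∈ A
    · simpa [f', hi] using hmono i
    · simpa [f', hi] using monotone_const
  have hdep' : ∀ i, DependsOn (f' i) (dep' i) := fun i => by
    by_cases hi : i ∈ A
    · simpa [f', dep', hi] using hdep i
    · simpa [f', dep', hi] using dependsOn_const (ρ₀ i)
  have hstable : Stable box f' W N (ρ₀, (r.state 0).2 ∩ A) := fun j hj hjQ => by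
    by_cases hjA : j ∈ A
    · rw [newValue_congr rfl (show f' j ρ₀ = f j ρ₀ by simp [f', hjA])]
      exact r.stable 0 j (by omega) fun h => hjQ (mem_inter.2 ⟨h, hjA⟩)
    · simp [newValue, f', hjA, hbox]
  have hinfl : ∀ i ∈ A, infl dep' N i = infl dep (N + 1) i ∩ A := fun i _ => by
    ext x
    simp only [infl, dep', mem_filter, mem_range, mem_inter]
    by_cases hx : x ∈ A
    · simp [hx, hAN x hx, Nat.lt_succ_of_lt (hAN x hx)]
    · simp [hx]
  refine r.eventually_head_notMem (T := 0) (V := {j | j ∈ A ∨ N + 1 ≤ j}) (fun j hj => .inl hj)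
    (ih f' dep' W hmono' hdep' (hadm.mono (fun i => by by_cases hi : i ∈ A <;> simp [dep', hi])
      (by omega)) _ (inter_subset_right.trans fun j hj => mem_range.2 (hAN j hj)) hstable)
    (fun t _ ρ hρ i hi => ?_) hinfl fun t _ hA => ⟨?_, ?_⟩
  · simp only [f', if_pos hi]
    refine hdep i fun j hj => hρ j ?_
    by_cases hjN : j < N + 1
    · exact .inl (hadm.mem_ancestors_of_mem_dep hNW (.inl hi) hjN hj)
    · exact .inr (by omega)
  · exact disjoint_left.2 fun x hx hxA =>
      hA (hadm.mem_ancestors_of_mem_dep hNW (.inl hxA) (r.head_lt t) (mem_filter.1 hx).2)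
  · have := r.head_lt t
    rintro (h | h)
    exacts [hA h, by omega]

theorem eventually_rhs_top_eq [Preorder D] (ih : Terminates box N) (hbox : ∀ a, box a a = a)
    (hmono : ∀ i, Monotone (f i)) (hdep : ∀ i, DependsOn (f i) (dep i))
    (hadm : Admissible dep W (N + 1)) (hNW : N ∉ W) :
    ∃ T, ∀ t ≥ T, f N (r.state t).1 = f N (r.state T).1 := by
  obtain ⟨T, hT⟩ :=
    eventually_atTop.1 (r.eventually_head_notMem_ancestors ih hbox hmono hdep hadm hNW)
  refine ⟨T, fun t ht => ?_⟩
  induction t, ht using Nat.le_induction with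
  | base => rfl
  | succ t ht ih =>
    rw [← ih]
    refine hdep N fun j hj => r.state_succ_fst_of_ne fun hjt => hT t ht ?_
    exact hadm.mem_ancestors_of_mem_dep hNW (.inr rfl) (hjt ▸ r.head_lt t) (hjt ▸ hj)

end

end DivergentRun

section Termination

variable {D : Type*} [PartialOrder D] {w nar : D → D → D}

theorem terminates_succ (hw2 : ∀ a b, b ≤ w a b)
    (hn : ∀ a b, b ≤ a → b ≤ nar a b ∧ nar a b ≤ a)
    (hwterm : ∀ d b : ℕ → D, (∀ i, d (i+1) = w (d i) (b i)) →
      ∃ N, ∀ m, N ≤ m → d m = d N)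
    (hnterm : ∀ d b : ℕ → D, (∀ i, b i ≤ d i ∧ d (i+1) = nar (d i) (b i)) →
      ∃ N, ∀ m, N ≤ m → d m = d N)
    {N : ℕ} (ih : Terminates (combine w nar) N) : Terminates (combine w nar) (N + 1) := by
  intro f dep W hmono hdep hadm s hQ hs
  by_contra hdiv
  push Not at hdiv
  set r := DivergentRun.ofIterate hdep hQ hs hdiv
  have hfreq := r.frequently_head_eq ih hmono hdep hadm
  set d : ℕ → D := fun k => (r.state (r.topTime k)).1 N
  set b : ℕ → D := fun k => f N (r.state (r.topTime k)).1
  have hd : ∀ k, d (k + 1) = newValue (combine w nar) f W (r.state (r.topTime k)).1 N :=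
    DivergentRun.state_topTime_succ hfreq
  have hchange : ∀ k, d (k + 1) ≠ d k := fun k => by
    rw [hd k]
    exact r.newValue_ne_of_head_eq (DivergentRun.head_topTime hfreq k)
  by_cases hNW : N ∈ W
  · obtain ⟨k, hk⟩ := exists_succ_eq_of_eq_combine hwterm hnterm (d := d) (b := b)
      (fun k => by rw [hd k, newValue, if_pos hNW])
      (fun k₀ h₀ k hk => r.rhs_top_le_of_le hmono (fun _ _ => le_of_combine_eq hw2)
        (fun _ _ => combine_mem_Icc hn) hfreq hk h₀)
    exact hchange k hk
  · obtain ⟨T, hT⟩ := r.eventually_rhs_top_eq ih (combine_self hn) hmono hdep hadm hNW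
    have hdb : ∀ k, d (k + 1) = b k := fun k => by rw [hd k, newValue, if_neg hNW]
    have hb : ∀ k ≥ T, b k = f N (r.state T).1 := fun k hk =>
      hT _ (hk.trans (DivergentRun.topTime_strictMono hfreq).le_apply)
    exact hchange (T + 1) (by rw [hdb, hdb, hb _ (by omega), hb _ le_rfl])

theorem terminates (hw2 : ∀ a b, b ≤ w a b)
    (hn : ∀ a b, b ≤ a → b ≤ nar a b ∧ nar a b ≤ a)
    (hwterm : ∀ d b : ℕ → D, (∀ i, d (i+1) = w (d i) (b i)) →
      ∃ N, ∀ m, N ≤ m → d m = d N)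
    (hnterm : ∀ d b : ℕ → D, (∀ i, b i ≤ d i ∧ d (i+1) = nar (d i) (b i)) →
      ∃ N, ∀ m, N ≤ m → d m = d N) : ∀ N, Terminates (combine w nar) N
  | 0 => fun _ _ _ _ _ _ _ hQ _ => ⟨0, subset_empty.1 (by simpa using hQ)⟩
  | N + 1 => terminates_succ hw2 hn hwterm hnterm (terminates hw2 hn hwterm hnterm N)

end Termination

open Classical in
theorem stmt11_general {D : Type*} [PartialOrder D]
    (w nar : D → D → D)
    (hw2 : ∀ a b, b ≤ w a b)
    (hn : ∀ a b, b ≤ a → b ≤ nar a b ∧ nar a b ≤ a)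
    (hwterm : ∀ d b : ℕ → D, (∀ i, d (i+1) = w (d i) (b i)) →
      ∃ N, ∀ m, N ≤ m → d m = d N)
    (hnterm : ∀ d b : ℕ → D, (∀ i, b i ≤ d i ∧ d (i+1) = nar (d i) (b i)) →
      ∃ N, ∀ m, N ≤ m → d m = d N)
    (n : ℕ) (f : ℕ → (ℕ → D) → D) (hmono : ∀ i, Monotone (f i))
    (dep : ℕ → Finset ℕ)
    (hdep : ∀ i (ρ ρ' : ℕ → D), (∀ j ∈ dep i, ρ j = ρ' j) → f i ρ = f i ρ')
    (W : Set ℕ)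
    -- admissibility: on every cycle of the dependency graph (edge x_j → x_i
    -- iff x_j ∈ dep_i), the unknown with the highest index belongs to W
    (hadm : ∀ (c : ℕ → ℕ) (p : ℕ), 0 < p → (∀ k, c (k + p) = c k) →
      (∀ k, c k ∈ dep (c (k+1))) → (∀ k, c k < n) →
      ∃ k, c k ∈ W ∧ ∀ j, c j ≤ c k)
    (ρ0 : ℕ → D) :
    ∃ k : ℕ,
      ((swStepW (combine w nar) f
          (fun i => (Finset.range n).filter (fun j => i ∈ dep j)) W)^[k]
          (ρ0, Finset.range n)).2 = ∅ :=
  terminates hw2 hn hwterm hnterm n f dep W hmono (fun i _ _ h => hdep i _ _ h) hadm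
    (ρ0, range n) subset_rfl fun _ hj hjQ => absurd (mem_range.2 hj) hjQ

open Classical in
theorem stmt11 {D : Type*} [PartialOrder D]
    (hdir : ∀ a b : D, ∃ c, a ≤ c ∧ b ≤ c)
    (w nar : D → D → D)
    (hw1 : ∀ a b, a ≤ w a b) (hw2 : ∀ a b, b ≤ w a b)
    (hn : ∀ a b, b ≤ a → b ≤ nar a b ∧ nar a b ≤ a)
    (hwterm : ∀ d b : ℕ → D, (∀ i, d (i+1) = w (d i) (b i)) →
      ∃ N, ∀ m, N ≤ m → d m = d N)
    (hnterm : ∀ d b : ℕ → D, (∀ i, b i ≤ d i ∧ d (i+1) = nar (d i) (b i)) →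
      ∃ N, ∀ m, N ≤ m → d m = d N)
    (n : ℕ) (f : ℕ → (ℕ → D) → D) (hmono : ∀ i, Monotone (f i))
    (dep : ℕ → Finset ℕ)
    (hdep : ∀ i (ρ ρ' : ℕ → D), (∀ j ∈ dep i, ρ j = ρ' j) → f i ρ = f i ρ')
    (W : Set ℕ)
    -- admissibility: on every cycle of the dependency graph (edge x_j → x_i
    -- iff x_j ∈ dep_i), the unknown with the highest index belongs to W
    (hadm : ∀ (c : ℕ → ℕ) (p : ℕ), 0 < p → (∀ k, c (k + p) = c k) →
      (∀ k, c k ∈ dep (c (k+1))) → (∀ k, c k < n) →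
      ∃ k, c k ∈ W ∧ ∀ j, c j ≤ c k)
    (ρ0 : ℕ → D) :
    ∃ k : ℕ,
      ((swStepW (combine w nar) f
          (fun i => (Finset.range n).filter (fun j => i ∈ dep j)) W)^[k]
          (ρ0, Finset.range n)).2 = ∅ :=
  stmt11_general w nar hw2 hn hwterm hnterm n f hmono dep hdep W hadm ρ0
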